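/- Let p be a prime, γ ≥ 1 an integer, and C a nonempty subset of ℤ/p^γℤ. Suppose #C ≤ p^n for some integer 1 ≤ n ≤ γ and there exist integers 1 ≤ i_1 < i_2 < … < i_n ≤ γ such that ∑_{c∈C} e^{2πi c̃ / p^{i_k}} = 0 for every 1 ≤ k ≤ n, where c̃ denotes any integer lift of c. Then #C = p^n, and for every integer 0 ≤ m ≤ γ the image of C in ℤ/p^mℤ has cardinality exactly p^{#{k ∈ {1,…,n} : i_k ≤ m}} (so C is p-homogeneous). -/

import Mathlib

/-!
Let `T ⊆ ℕ` be the set of lifts of `C` and `a m` the number of residues of `T` modulo `p ^ m`.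
If `∑_{x ∈ T} ζ ^ x = 0` for a primitive `p ^ (t + 1)`-th root of unity `ζ`, the polynomial
`∑_{x ∈ T} X ^ (x mod p ^ (t + 1))` is a multiple of `Φ_{p^(t+1)}`, and since
`Φ_{p^(t+1)} * (X ^ p ^ t - 1) = X ^ p ^ (t + 1) - 1` its coefficients are `p ^ t`-periodic.
So each residue modulo `p ^ t` hit by `T` has all `p` of its lifts modulo `p ^ (t + 1)` hit:
`a (t + 1) = p * a t`. As `a` is monotone with `a 0 ≥ 1`, the `n` jumps at the levels `i k`
give `a γ ≥ p ^ n`; with `a γ = #C ≤ p ^ n` no other growth is possible, which determines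
every `a m`.
-/

open Finset Polynomial

theorem Polynomial.coeff_eq_coeff_add_of_aeval_primitiveRoot_eq_zero {K : Type*} [Field K]
    [CharZero K] {p t : ℕ} [hp : Fact p.Prime] {ζ : K} (hζ : IsPrimitiveRoot ζ (p ^ (t + 1)))
    {f : ℤ[X]} (hdeg : f.natDegree < p ^ (t + 1)) (hf : aeval ζ f = 0) {e : ℕ}
    (he : e + p ^ t < p ^ (t + 1)) : f.coeff e = f.coeff (e + p ^ t) := by
  have hpos : 0 < p ^ (t + 1) := pow_pos hp.out.pos _
  obtain ⟨g, rfl⟩ : cyclotomic (p ^ (t + 1)) ℤ ∣ f := by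
    rw [cyclotomic_eq_minpoly hζ hpos]
    exact minpoly.isIntegrallyClosed_dvd (hζ.isIntegral hpos) hf
  have hsplit : p ^ t * (p - 1) + p ^ t = p ^ (t + 1) := by
    rw [pow_succ, ← Nat.mul_add_one, Nat.sub_add_cancel hp.out.one_le]
  have hg : g.natDegree < p ^ t := by
    rcases eq_or_ne g 0 with rfl | hg0
    · simpa using pow_pos hp.out.pos t
    rw [natDegree_mul (cyclotomic_ne_zero _ ℤ) hg0, natDegree_cyclotomic,
      Nat.totient_prime_pow_succ hp.out] at hdeg
    omega
  have hid : cyclotomic (p ^ (t + 1)) ℤ * g * (X ^ p ^ t - 1) = X ^ p ^ (t + 1) * g - g := by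
    rw [mul_right_comm, cyclotomic_prime_pow_mul_X_pow_sub_one, sub_mul, one_mul]
  have hcoeff := congrArg (coeff · (e + p ^ t)) hid
  simp only [mul_sub, mul_one, coeff_sub, coeff_mul_X_pow, coeff_X_pow_mul', if_neg (not_le.mpr he),
    coeff_eq_zero_of_natDegree_lt (show g.natDegree < e + p ^ t by omega)] at hcoeff
  linarith

theorem Finset.mem_image_mod_iff_add_of_sum_primitiveRoot_eq_zero {K : Type*} [Field K]
    [CharZero K] {p t : ℕ} [hp : Fact p.Prime] {ζ : K} (hζ : IsPrimitiveRoot ζ (p ^ (t + 1)))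
    {T : Finset ℕ} (hT : ∑ x ∈ T, ζ ^ x = 0) {e : ℕ} (he : e + p ^ t < p ^ (t + 1)) :
    e ∈ T.image (· % p ^ (t + 1)) ↔ e + p ^ t ∈ T.image (· % p ^ (t + 1)) := by
  set f : ℤ[X] := ∑ x ∈ T, X ^ (x % p ^ (t + 1))
  have hpos : 0 < p ^ (t + 1) := pow_pos hp.out.pos _
  have hmem : ∀ d, d ∈ T.image (· % p ^ (t + 1)) ↔ f.coeff d ≠ 0 := by
    intro d
    simp only [f, mem_image, finsetSum_coeff, coeff_X_pow, sum_boole, Nat.cast_ne_zero,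
      ← pos_iff_ne_zero, card_pos, filter_nonempty_iff, eq_comm]
  have hdeg : f.natDegree < p ^ (t + 1) := by
    refine lt_of_le_of_lt (natDegree_sum_le_of_forall_le _ _ (n := p ^ (t + 1) - 1) ?_) (by omega)
    intro x _
    rw [natDegree_X_pow]
    have := Nat.mod_lt x hpos
    omega
  have hf : aeval ζ f = 0 := by
    simpa [f, ← pow_eq_pow_mod _ hζ.pow_eq_one] using hT
  rw [hmem, hmem, coeff_eq_coeff_add_of_aeval_primitiveRoot_eq_zero hζ hdeg hf he]

theorem Finset.card_image_mod_mul_of_periodic {T : Finset ℕ} {q p : ℕ} (hq : 0 < q) (hp : 0 < p)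
    (hper : ∀ e, e + q < q * p →
      (e ∈ T.image (· % (q * p)) ↔ e + q ∈ T.image (· % (q * p)))) :
    #(T.image (· % (q * p))) = #(T.image (· % q)) * p := by
  set R := T.image (· % (q * p))
  have hclass : ∀ r j, r < q → j < p → (r + j * q ∈ R ↔ r ∈ R) := by
    intro r j hr hj
    induction j with
    | zero => simp
    | succ j ih =>
      have hjq : (j + 2) * q ≤ p * q := Nat.mul_le_mul_right q hj
      rw [show r + (j + 1) * q = r + j * q + q by ring, ← hper _ (by nlinarith), ih (by omega)]
  have hdiv : ∀ e ∈ R, e / q < p := by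
    intro e he
    obtain ⟨x, -, rfl⟩ := mem_image.mp he
    exact Nat.div_lt_of_lt_mul (Nat.mod_lt _ (Nat.mul_pos hq hp))
  rw [← card_range p, ← card_product]
  symm
  refine card_nbij' (fun rj => rj.1 + rj.2 * q) (fun e => (e % q, e / q)) ?_ ?_ ?_ ?_
  · rintro ⟨r, j⟩ h
    simp only [coe_product, Set.mem_prod, mem_coe, mem_range, mem_image] at h
    obtain ⟨⟨x, hx, rfl⟩, hj⟩ := h
    have hxR : x % (q * p) ∈ R := mem_image_of_mem _ hx
    have hdecomp : x % q + x % (q * p) / q * q = x % (q * p) := by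
      rw [← Nat.mod_mul_right_mod x q p]
      exact Nat.mod_add_div' _ q
    have hlt := hdiv _ hxR
    rw [← hdecomp, hclass _ _ (Nat.mod_lt _ hq) hlt] at hxR
    exact (hclass _ _ (Nat.mod_lt _ hq) hj).mpr hxR
  · intro e he
    obtain ⟨x, hx, rfl⟩ := mem_image.mp he
    simp only [coe_product, Set.mem_prod, mem_coe, mem_range, mem_image]
    exact ⟨⟨x, hx, (Nat.mod_mul_right_mod x q p).symm⟩, hdiv _ (mem_image_of_mem _ hx)⟩
  · rintro ⟨r, j⟩ h
    simp only [coe_product, Set.mem_prod, mem_coe, mem_range, mem_image] at h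
    obtain ⟨⟨x, -, rfl⟩, -⟩ := h
    simp [Nat.mod_eq_of_lt (Nat.mod_lt x hq), Nat.add_mul_div_right _ _ hq,
      Nat.div_eq_of_lt (Nat.mod_lt x hq)]
  · intro e _
    exact Nat.mod_add_div' e q

theorem Finset.card_image_mod_prime_pow_succ {K : Type*} [Field K] [CharZero K] {p t : ℕ}
    [hp : Fact p.Prime] {ζ : K} (hζ : IsPrimitiveRoot ζ (p ^ (t + 1))) {T : Finset ℕ}
    (hT : ∑ x ∈ T, ζ ^ x = 0) :
    #(T.image (· % p ^ (t + 1))) = #(T.image (· % p ^ t)) * p := by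
  have hper := fun e => T.mem_image_mod_iff_add_of_sum_primitiveRoot_eq_zero hζ hT (e := e)
  rw [pow_succ] at hper ⊢
  exact card_image_mod_mul_of_periodic (pow_pos hp.out.pos t) hp.out.pos hper

theorem Finset.card_image_mod_le_of_dvd (T : Finset ℕ) {m m' : ℕ} (h : m ∣ m') :
    #(T.image (· % m)) ≤ #(T.image (· % m')) := by
  calc #(T.image (· % m)) = #((T.image (· % m')).image (· % m)) := by
        rw [image_image]
        exact congrArg card (image_congr fun x _ => (Nat.mod_mod_of_dvd x h).symm)
    _ ≤ #(T.image (· % m')) := card_image_le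

theorem Finset.image_mod_of_forall_lt {T : Finset ℕ} {N : ℕ} (h : ∀ x ∈ T, x < N) :
    T.image (· % N) = T :=
  (image_congr fun x hx => Nat.mod_eq_of_lt (h x hx)).trans image_id'

theorem Monotone.pow_card_inter_Ioc_mul_le {a : ℕ → ℕ} (ha : Monotone a) {p : ℕ}
    {S : Finset ℕ} (hjump : ∀ s ∈ S, a (s - 1) * p ≤ a s) {m m' : ℕ} (hmm' : m ≤ m') :
    p ^ #(S ∩ Ioc m m') * a m ≤ a m' := by
  induction m', hmm' using Nat.le_induction with
  | base => simp
  | succ m' hm ih =>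
    rw [← Order.succ_eq_add_one, ← insert_Ioc_right_eq_Ioc_succ hm, Order.succ_eq_add_one]
    by_cases hs : m' + 1 ∈ S
    · rw [inter_insert_of_mem hs, card_insert_of_notMem (by simp), pow_succ]
      calc p ^ #(S ∩ Ioc m m') * p * a m = p ^ #(S ∩ Ioc m m') * a m * p := by ring
        _ ≤ a m' * p := Nat.mul_le_mul_right p ih
        _ ≤ a (m' + 1) := hjump _ hs
    · rw [inter_insert_of_notMem hs]
      exact ih.trans (ha m'.le_succ)

theorem Monotone.eq_pow_card_filter_le_of_le_pow_card {a : ℕ → ℕ} (ha : Monotone a)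
    (ha0 : 0 < a 0) {p γ : ℕ} (hp : 0 < p) {S : Finset ℕ} (hS : S ⊆ Ioc 0 γ)
    (hjump : ∀ s ∈ S, a (s - 1) * p ≤ a s) (hγ : a γ ≤ p ^ #S) {m : ℕ} (hm : m ≤ γ) :
    a m = p ^ #{s ∈ S | s ≤ m} := by
  have hlow : S ∩ Ioc 0 m = {s ∈ S | s ≤ m} := by
    ext s
    simp only [mem_inter, mem_Ioc, mem_filter, and_congr_right_iff, and_iff_right_iff_imp]
    exact fun hs _ => (mem_Ioc.mp (hS hs)).1
  have hsplit : #(S ∩ Ioc 0 m) + #(S ∩ Ioc m γ) = #S := by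
    rw [← card_union_of_disjoint ((Ioc_disjoint_Ioc_of_le le_rfl).mono inter_subset_right
      inter_subset_right), ← inter_union_distrib_left, Ioc_union_Ioc_eq_Ioc m.zero_le hm,
      inter_eq_left.mpr hS]
  have hge : p ^ #(S ∩ Ioc 0 m) ≤ a m :=
    (Nat.le_mul_of_pos_right _ ha0).trans (ha.pow_card_inter_Ioc_mul_le hjump m.zero_le)
  have hle : p ^ #(S ∩ Ioc m γ) * a m ≤ p ^ #(S ∩ Ioc m γ) * p ^ #(S ∩ Ioc 0 m) :=
    calc p ^ #(S ∩ Ioc m γ) * a m ≤ a γ := ha.pow_card_inter_Ioc_mul_le hjump hm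
      _ ≤ p ^ #S := hγ
      _ = _ := by rw [← pow_add, ← hsplit, add_comm]
  rw [← hlow]
  exact le_antisymm (Nat.le_of_mul_le_mul_left hle (pow_pos hp _)) hge

theorem ZMod.card_image_castHom {N m : ℕ} [NeZero N] [NeZero m] (h : m ∣ N)
    (C : Finset (ZMod N)) :
    #(C.image (ZMod.castHom h (ZMod m))) = #((C.image ZMod.val).image (· % m)) := by
  rw [← card_image_of_injective _ (ZMod.val_injective m), image_image, image_image]
  refine congrArg Finset.card (image_congr fun c _ => ?_)
  rw [Function.comp_apply, Function.comp_apply, ZMod.castHom_apply, ZMod.cast_eq_val,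
    ZMod.val_natCast]

theorem ZMod.sum_exp_two_pi_I_mul_val_div {N : ℕ} [NeZero N] (C : Finset (ZMod N)) (z : ℂ) :
    ∑ c ∈ C, Complex.exp (2 * Real.pi * Complex.I * (c.val / z)) =
      ∑ x ∈ C.image ZMod.val, Complex.exp (2 * Real.pi * Complex.I / z) ^ x := by
  rw [sum_image fun x _ y _ h => ZMod.val_injective N h]
  refine sum_congr rfl fun c _ => ?_
  rw [← Complex.exp_nat_mul]
  congr 1
  ring

theorem zmod_vanishing_implies_pHomogeneous_general
    (p γ n : ℕ) [Fact p.Prime]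
    (C : Finset (ZMod (p ^ γ))) (hCne : C.Nonempty)
    (hcard : C.card ≤ p ^ n)
    (i : Fin n → ℕ) (hmono : StrictMono i)
    (hi1 : ∀ k, 1 ≤ i k) (hiγ : ∀ k, i k ≤ γ)
    (hsum : ∀ k : Fin n,
      ∑ c ∈ C, Complex.exp (2 * Real.pi * Complex.I * ((c.val : ℂ) / (p : ℂ) ^ (i k))) = 0) :
    C.card = p ^ n ∧
    ∀ m : ℕ, ∀ hm : m ≤ γ,
      (C.image (ZMod.castHom (pow_dvd_pow p hm) (ZMod (p ^ m)))).card =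
        p ^ (Finset.univ.filter (fun k : Fin n => i k ≤ m)).card := by
  have hp : p.Prime := Fact.out
  set T := C.image ZMod.val
  have hTC : #T = #C := card_image_of_injective _ (ZMod.val_injective _)
  have hTγ : T.image (· % p ^ γ) = T := image_mod_of_forall_lt (by simp [T, ZMod.val_lt])
  have hjump : ∀ s ∈ univ.image i,
      #(T.image (· % p ^ (s - 1))) * p ≤ #(T.image (· % p ^ s)) := by
    simp only [mem_image, mem_univ, true_and, forall_exists_index, forall_apply_eq_imp_iff]
    intro k
    obtain ⟨t, ht⟩ : ∃ t, i k = t + 1 := ⟨i k - 1, by have := hi1 k; omega⟩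
    have hζ := Complex.isPrimitiveRoot_exp (p ^ (t + 1)) (pow_pos hp.pos _).ne'
    rw [ht, Nat.add_sub_cancel]
    refine (card_image_mod_prime_pow_succ hζ ?_).ge
    rw [← ZMod.sum_exp_two_pi_I_mul_val_div, ← hsum k, ht, Nat.cast_pow]
  have hS : univ.image i ⊆ Ioc 0 γ := by
    simpa [subset_iff] using fun k => ⟨hi1 k, hiγ k⟩
  have hTmono : Monotone fun m => #(T.image (· % p ^ m)) :=
    fun m m' h => card_image_mod_le_of_dvd T (pow_dvd_pow p h)
  have hTγle : #(T.image (· % p ^ γ)) ≤ p ^ #(univ.image i) := by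
    rwa [hTγ, hTC, card_image_of_injective _ hmono.injective, card_univ, Fintype.card_fin]
  have hlevels : ∀ m ≤ γ, #(T.image (· % p ^ m)) = p ^ #{k | i k ≤ m} := by
    intro m hm
    rw [hTmono.eq_pow_card_filter_le_of_le_pow_card (card_pos.mpr ((hCne.image _).image _))
      hp.pos hS hjump hTγle hm, filter_image, card_image_of_injective _ hmono.injective]
  refine ⟨?_, fun m hm => ?_⟩
  · rw [← hTC, ← hTγ, hlevels γ le_rfl, filter_true_of_mem fun k _ => hiγ k, card_univ,
      Fintype.card_fin]
  · rw [ZMod.card_image_castHom, hlevels m hm]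

/-- if `#C ≤ p^n` and there are `1 ≤ i_1 < ⋯ < i_n ≤ γ` with
`∑_{c∈C} e^{2πi c / p^{i_k}} = 0` for all `k`, then `#C = p^n` and for every `0 ≤ m ≤ γ` the
image of `C` in `ℤ/p^mℤ` has cardinality `p^{#{k : i_k ≤ m}}`. -/
theorem zmod_vanishing_implies_pHomogeneous
    (p γ n : ℕ) [Fact p.Prime] (hγ : 1 ≤ γ) (hn1 : 1 ≤ n) (hnγ : n ≤ γ)
    (C : Finset (ZMod (p ^ γ))) (hCne : C.Nonempty)
    (hcard : C.card ≤ p ^ n)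
    (i : Fin n → ℕ) (hmono : StrictMono i)
    (hi1 : ∀ k, 1 ≤ i k) (hiγ : ∀ k, i k ≤ γ)
    (hsum : ∀ k : Fin n,
      ∑ c ∈ C, Complex.exp (2 * Real.pi * Complex.I * ((c.val : ℂ) / (p : ℂ) ^ (i k))) = 0) :
    C.card = p ^ n ∧
    ∀ m : ℕ, ∀ hm : m ≤ γ,
      (C.image (ZMod.castHom (pow_dvd_pow p hm) (ZMod (p ^ m)))).card =
        p ^ (Finset.univ.filter (fun k : Fin n => i k ≤ m)).card :=
  zmod_vanishing_implies_pHomogeneous_general p γ n C hCne hcard i hmono hi1 hiγ hsum
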